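/- Let U ∈ B(H ⊗ K) satisfy (Δ⊗id)(U) = U₁₃U₂₃ (a corepresentation), where Δ(a) = W*(1⊗a)W for a multiplicative unitary W, and suppose V ∈ B(H⊗K) satisfies VU* = 1. Then V₁₃ Ŵ₁₂ U*₁₃ = U*₂₃ Ŵ₁₂ on H⊗H⊗K, where Ŵ = ΣW*Σ. -/
import Mathlib


open ContinuousLinearMap

/-- Let `W` be a multiplicative unitary on `E = H ⊗ H` with flip `S` and
`Ŵ = ΣW*Σ`.  Let `U ∈ B(H ⊗ K)` (with `EK` standing for `H ⊗ K`) be a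
corepresentation: `(Δ⊗id)(U) = U₁₃U₂₃`, i.e. `W₁₂* U₂₃ W₁₂ = U₁₃U₂₃` in
`B(E3)` (`E3` standing for `H⊗H⊗K`; `jW` embeds `B(E)` into legs `1,2`,
`j13, j23` embed `B(EK)` into legs `(1,3)`, `(2,3)`, all unital
`*`-homomorphisms, intertwined by the flip `SF` of the two `H` legs).
If `V U* = 1`, then `V₁₃ Ŵ₁₂ U*₁₃ = U*₂₃ Ŵ₁₂`. -/
theorem stmt13 {H K E EK E3 : Type*}
    [NormedAddCommGroup H] [InnerProductSpace ℂ H] [CompleteSpace H]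
    [NormedAddCommGroup K] [InnerProductSpace ℂ K] [CompleteSpace K]
    [NormedAddCommGroup E] [InnerProductSpace ℂ E] [CompleteSpace E]
    [NormedAddCommGroup EK] [InnerProductSpace ℂ EK] [CompleteSpace EK]
    [NormedAddCommGroup E3] [InnerProductSpace ℂ E3] [CompleteSpace E3]
    (W S : E →L[ℂ] E)
    (hW1 : (ContinuousLinearMap.adjoint W).comp W = 1)
    (hW2 : W.comp (ContinuousLinearMap.adjoint W) = 1)
    (hS : S.comp S = 1) (hSadj : ContinuousLinearMap.adjoint S = S)
    (Wh : E →L[ℂ] E)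
    (hWh : Wh = S.comp ((ContinuousLinearMap.adjoint W).comp S))
    (U V : EK →L[ℂ] EK)
    (jW : (E →L[ℂ] E) → (E3 →L[ℂ] E3))
    (j13 j23 : (EK →L[ℂ] EK) → (E3 →L[ℂ] E3))
    (hjWmul : ∀ x y : E →L[ℂ] E, jW (x.comp y) = (jW x).comp (jW y))
    (hjWadj : ∀ x : E →L[ℂ] E, jW (ContinuousLinearMap.adjoint x) =
      ContinuousLinearMap.adjoint (jW x))
    (hjWone : jW 1 = 1)
    (hj : ∀ jj ∈ ({j13, j23} : Set ((EK →L[ℂ] EK) → (E3 →L[ℂ] E3))),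
      (∀ x y : EK →L[ℂ] EK, jj (x.comp y) = (jj x).comp (jj y)) ∧
      (∀ x : EK →L[ℂ] EK, jj (ContinuousLinearMap.adjoint x) =
        ContinuousLinearMap.adjoint (jj x)) ∧
      jj 1 = 1)
    (SF : E3 →L[ℂ] E3) (hSF : SF.comp SF = 1)
    (hSFW : ∀ x : E →L[ℂ] E,
      SF.comp ((jW x).comp SF) = jW (S.comp (x.comp S)))
    (hSF13 : ∀ u : EK →L[ℂ] EK, SF.comp ((j13 u).comp SF) = j23 u)
    (hSF23 : ∀ u : EK →L[ℂ] EK, SF.comp ((j23 u).comp SF) = j13 u)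
    (hcorep : (jW (ContinuousLinearMap.adjoint W)).comp
        ((j23 U).comp (jW W)) = (j13 U).comp (j23 U))
    (hV : V.comp (ContinuousLinearMap.adjoint U) = 1) :
    (j13 V).comp ((jW Wh).comp (j13 (ContinuousLinearMap.adjoint U))) =
      (j23 (ContinuousLinearMap.adjoint U)).comp (jW Wh) := by
  obtain ⟨h13m, h13a, h13o⟩ := hj j13 (by simp)
  obtain ⟨h23m, h23a, h23o⟩ := hj j23 (by simp)
  simp only [← ContinuousLinearMap.mul_def, ← ContinuousLinearMap.star_eq_adjoint] at hW1 hW2 hS hWh hjWmul hjWadj hj hSFW hSF13 hSF23 hcorep hV hSF hSadj h13m h13a h23m h23a ⊢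
  -- cancellation helpers
  have hS2 : ∀ x : E →L[ℂ] E, S * (S * x) = x := fun x => by
    rw [← mul_assoc, hS, one_mul]
  have hW1' : ∀ x : E →L[ℂ] E, star W * (W * x) = x := fun x => by
    rw [← mul_assoc, hW1, one_mul]
  have hW2' : ∀ x : E →L[ℂ] E, W * (star W * x) = x := fun x => by
    rw [← mul_assoc, hW2, one_mul]
  have hSF2 : ∀ x : E3 →L[ℂ] E3, SF * (SF * x) = x := fun x => by
    rw [← mul_assoc, hSF, one_mul]
  -- star of Wh
  have hq : star Wh = S * (W * S) := by
    rw [hWh]; simp only [star_mul, star_star, hSadj, mul_assoc]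
  -- Wh is unitary
  have hww : Wh * star Wh = 1 := by
    rw [hq, hWh]; simp only [mul_assoc, hS2]
    rw [hW1', hS]
  have hw'w : star Wh * Wh = 1 := by
    rw [hq, hWh]; simp only [mul_assoc, hS2]
    rw [hW2', hS]
  -- jW Wh is unitary
  have hu1 : jW Wh * star (jW Wh) = 1 := by
    rw [← hjWadj, ← hjWmul, hww, hjWone]
  have hu2 : star (jW Wh) * jW Wh = 1 := by
    rw [← hjWadj, ← hjWmul, hw'w, hjWone]
  -- conjugation combinators
  have key2 : ∀ x y : E3 →L[ℂ] E3,
      (SF * (x * SF)) * (SF * (y * SF)) = SF * ((x * y) * SF) := fun x y => by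
    simp only [mul_assoc, hSF2]
  have key3 : ∀ x y z : E3 →L[ℂ] E3,
      (SF * (x * SF)) * ((SF * (y * SF)) * (SF * (z * SF)))
        = SF * ((x * (y * z)) * SF) := fun x y z => by
    simp only [mul_assoc, hSF2]
  -- conjugated corepresentation identity
  have hA : jW Wh * (j13 U * jW (S * (W * S))) = j23 U * j13 U := by
    calc jW Wh * (j13 U * jW (S * (W * S)))
        = (SF * (jW (star W) * SF)) *
            ((SF * (j23 U * SF)) * (SF * (jW W * SF))) := by
          rw [hWh, ← hSFW, ← hSFW, ← hSF23]
      _ = SF * ((jW (star W) * (j23 U * jW W)) * SF) := key3 _ _ _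
      _ = SF * ((j13 U * j23 U) * SF) := by rw [hcorep]
      _ = (SF * (j13 U * SF)) * (SF * (j23 U * SF)) := (key2 _ _).symm
      _ = j23 U * j13 U := by rw [hSF13, hSF23]
  have hq3 : jW (S * (W * S)) = star (jW Wh) := by rw [← hq, hjWadj]
  rw [hq3] at hA
  -- move Wh to the right
  have hB : jW Wh * j13 U = j23 U * (j13 U * jW Wh) := by
    calc jW Wh * j13 U
        = jW Wh * (j13 U * (star (jW Wh) * jW Wh)) := by rw [hu2, mul_one]
      _ = (jW Wh * (j13 U * star (jW Wh))) * jW Wh := by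
          simp only [mul_assoc]
      _ = (j23 U * j13 U) * jW Wh := by rw [hA]
      _ = j23 U * (j13 U * jW Wh) := by rw [mul_assoc]
  -- adjoint of hB
  have hC : star (j13 U) * star (jW Wh)
      = star (jW Wh) * (star (j13 U) * star (j23 U)) := by
    have := congrArg star hB
    simpa only [star_mul, mul_assoc] using this
  have hE : jW Wh * (star (j13 U) * star (jW Wh))
      = star (j13 U) * star (j23 U) := by
    calc jW Wh * (star (j13 U) * star (jW Wh))
        = jW Wh * (star (jW Wh) * (star (j13 U) * star (j23 U))) := by rw [hC]
      _ = (jW Wh * star (jW Wh)) * (star (j13 U) * star (j23 U)) := by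
          rw [mul_assoc]
      _ = star (j13 U) * star (j23 U) := by rw [hu1, one_mul]
  have hD : jW Wh * star (j13 U)
      = star (j13 U) * (star (j23 U) * jW Wh) := by
    calc jW Wh * star (j13 U)
        = jW Wh * (star (j13 U) * (star (jW Wh) * jW Wh)) := by
          rw [hu2, mul_one]
      _ = (jW Wh * (star (j13 U) * star (jW Wh))) * jW Wh := by
          simp only [mul_assoc]
      _ = (star (j13 U) * star (j23 U)) * jW Wh := by rw [hE]
      _ = star (j13 U) * (star (j23 U) * jW Wh) := by rw [mul_assoc]
  -- finish
  rw [h13a, h23a, hD, ← mul_assoc, ← h13a, ← h13m, hV, h13o, one_mul]
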